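/- Let V be a real vector space of finite dimension m. For all spinors s, t ∈ ∧•V* and every v = X + ξ ∈ V ⊕ V*, the Mukai pairing satisfies (v·s, v·t) = ξ(X)·(s, t), i.e. Clifford multiplication by v rescales the pairing by the value of the quadratic form Q(v) = ξ(X) = ⟨v, v⟩. -/

import Mathlib

set_option synthInstance.maxHeartbeats 1000000
set_option maxHeartbeats 1000000

open Module

section MukaiAux1

variable {V : Type*} [AddCommGroup V] [Module ℝ V]

lemma mukaiAux_pow_zero_eq : (⋀[ℝ]^0 (Module.Dual ℝ V)) = 1 := pow_zero _

lemma mukaiAux_pow_one_eq :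
    (⋀[ℝ]^1 (Module.Dual ℝ V)) = LinearMap.range (ExteriorAlgebra.ι ℝ (M := Module.Dual ℝ V)) :=
  pow_one _

lemma mukaiAux_ι_mem (w : Module.Dual ℝ V) :
    ExteriorAlgebra.ι ℝ w ∈ ⋀[ℝ]^1 (Module.Dual ℝ V) := by
  rw [mukaiAux_pow_one_eq]; exact LinearMap.mem_range_self _ _

lemma mukaiAux_contract_zero (f : Module.Dual ℝ (Module.Dual ℝ V))
    {x : ExteriorAlgebra ℝ (Module.Dual ℝ V)}
    (hx : x ∈ ⋀[ℝ]^0 (Module.Dual ℝ V)) :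
    CliffordAlgebra.contractLeft (Q := (0 : QuadraticForm ℝ (Module.Dual ℝ V))) f x = 0 := by
  rw [mukaiAux_pow_zero_eq] at hx
  obtain ⟨r, rfl⟩ := Submodule.mem_one.mp hx
  exact CliffordAlgebra.contractLeft_algebraMap _ _ _

lemma mukaiAux_contract_mem (f : Module.Dual ℝ (Module.Dual ℝ V)) {k : ℕ}
    {x : ExteriorAlgebra ℝ (Module.Dual ℝ V)}
    (hx : x ∈ ⋀[ℝ]^k (Module.Dual ℝ V)) :
    CliffordAlgebra.contractLeft (Q := (0 : QuadraticForm ℝ (Module.Dual ℝ V))) f x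
      ∈ ⋀[ℝ]^(k-1) (Module.Dual ℝ V) := by
  induction hx using Submodule.pow_induction_on_left' with
  | algebraMap r => rw [CliffordAlgebra.contractLeft_algebraMap]; exact Submodule.zero_mem _
  | add x y i hx hy ihx ihy => rw [map_add]; exact add_mem ihx ihy
  | mem_mul m hm i x hx ih =>
      obtain ⟨w, rfl⟩ := hm
      rw [CliffordAlgebra.contractLeft_ι_mul]
      simp only [Nat.succ_sub_one]
      refine sub_mem (Submodule.smul_mem _ _ hx) ?_
      cases i with
      | zero => rw [mukaiAux_contract_zero f hx, mul_zero]; exact Submodule.zero_mem _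
      | succ n =>
          have := SetLike.mul_mem_graded (mukaiAux_ι_mem w) ih
          simpa [Nat.add_comm] using this

lemma mukaiAux_contract_mul (f : Module.Dual ℝ (Module.Dual ℝ V)) {p : ℕ}
    {x : ExteriorAlgebra ℝ (Module.Dual ℝ V)}
    (hx : x ∈ ⋀[ℝ]^p (Module.Dual ℝ V)) (y : ExteriorAlgebra ℝ (Module.Dual ℝ V)) :
    CliffordAlgebra.contractLeft (Q := (0 : QuadraticForm ℝ (Module.Dual ℝ V))) f (x * y)
      = CliffordAlgebra.contractLeft (Q := 0) f x * y
        + ((-1 : ℝ))^p • (x * CliffordAlgebra.contractLeft (Q := 0) f y) := by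
  induction hx using Submodule.pow_induction_on_left' generalizing y with
  | algebraMap r =>
      rw [CliffordAlgebra.contractLeft_algebraMap, zero_mul, zero_add, pow_zero, one_smul,
        ← Algebra.smul_def, ← Algebra.smul_def, map_smul]
  | add x z i hx hz ihx ihz =>
      simp only [add_mul, map_add, ihx, ihz, mul_add, smul_add]
      abel
  | mem_mul m hm i x hx ih =>
      obtain ⟨w, rfl⟩ := hm
      rw [mul_assoc, CliffordAlgebra.contractLeft_ι_mul, ih y,
        CliffordAlgebra.contractLeft_ι_mul]
      simp only [mul_add, sub_mul, smul_mul_assoc, mul_smul_comm, mul_assoc, pow_succ,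
        smul_smul, smul_sub, mul_sub, mul_neg_one, neg_smul]
      abel

lemma mukaiAux_ι_comm (ξ : Module.Dual ℝ V) {p : ℕ}
    {x : ExteriorAlgebra ℝ (Module.Dual ℝ V)}
    (hx : x ∈ ⋀[ℝ]^p (Module.Dual ℝ V)) :
    ExteriorAlgebra.ι ℝ ξ * x = ((-1 : ℝ))^p • (x * ExteriorAlgebra.ι ℝ ξ) := by
  induction hx using Submodule.pow_induction_on_left' with
  | algebraMap r =>
      rw [pow_zero, one_smul, ← Algebra.smul_def, ← Algebra.commutes, Algebra.smul_def]
  | add x z i hx hz ihx ihz =>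
      rw [mul_add, add_mul, ihx, ihz, smul_add]
  | mem_mul m hm i x hx ih =>
      obtain ⟨w, rfl⟩ := hm
      have hanti : ExteriorAlgebra.ι ℝ ξ * ExteriorAlgebra.ι ℝ w
          = -(ExteriorAlgebra.ι ℝ w * ExteriorAlgebra.ι ℝ ξ) :=
        eq_neg_of_add_eq_zero_left (ExteriorAlgebra.ι_add_mul_swap ξ w)
      rw [← mul_assoc, hanti, neg_mul, mul_assoc, ih, pow_succ, mul_smul_comm]
      simp [mul_assoc, mul_neg_one, neg_smul]

lemma mukaiAux_sign_succ (k : ℕ) :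
    ((-1 : ℝ)) ^ ((k+1) * ((k+1) - 1) / 2) = (-1 : ℝ)^k * (-1 : ℝ)^(k * (k - 1) / 2) := by
  have h2 : (k+1) * k = k * (k-1) + 2 * k := by
    cases k with
    | zero => rfl
    | succ n => simp only [Nat.succ_sub_one]; ring
  have he : Even (k * (k-1)) := by
    cases k with
    | zero => simp
    | succ n => simpa [Nat.succ_sub_one, Nat.mul_comm] using Nat.even_mul_succ_self n
  obtain ⟨c, hc⟩ := he
  have h3 : (k+1) * ((k+1) - 1) / 2 = k * (k-1) / 2 + k := by
    simp only [Nat.succ_sub_one]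
    omega
  rw [h3, pow_add, mul_comm]

lemma mukaiAux_neg_one_sq (p : ℕ) : ((-1 : ℝ))^p * ((-1 : ℝ))^p = 1 := by
  rw [← pow_add]
  exact Even.neg_one_pow ⟨p, rfl⟩

end MukaiAux1

/-- Projection onto the degree-`j` component of the exterior algebra. -/
noncomputable def extProj (V : Type*) [AddCommGroup V] [Module ℝ V] (j : ℕ) :
    ExteriorAlgebra ℝ (Module.Dual ℝ V) →ₗ[ℝ] ExteriorAlgebra ℝ (Module.Dual ℝ V) :=
  (Submodule.subtype _) ∘ₗ
    (DirectSum.component ℝ ℕ (fun i => ⋀[ℝ]^i (Module.Dual ℝ V)) j) ∘ₗ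
      (DirectSum.decomposeLinearEquiv (fun i : ℕ => ⋀[ℝ]^i (Module.Dual ℝ V))).toLinearMap

/-- The reversal antiautomorphism `α`, acting on the degree-`k` component as
`(−1)^{k(k−1)/2}`. -/
noncomputable def alphaMap (V : Type*) [AddCommGroup V] [Module ℝ V] :
    ExteriorAlgebra ℝ (Module.Dual ℝ V) →ₗ[ℝ] ExteriorAlgebra ℝ (Module.Dual ℝ V) :=
  (DirectSum.toModule ℝ ℕ (ExteriorAlgebra ℝ (Module.Dual ℝ V))
      fun k => ((-1 : ℝ) ^ (k * (k - 1) / 2)) • (Submodule.subtype _)) ∘ₗ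
    (DirectSum.decomposeLinearEquiv (fun i : ℕ => ⋀[ℝ]^i (Module.Dual ℝ V))).toLinearMap

/-- The Mukai pairing `(s, t) = (α(s) ∧ t)_m` on `∧•V*`. -/
noncomputable def mukai (V : Type*) [AddCommGroup V] [Module ℝ V]
    (s t : ExteriorAlgebra ℝ (Module.Dual ℝ V)) : ExteriorAlgebra ℝ (Module.Dual ℝ V) :=
  extProj V (Module.finrank ℝ V) (alphaMap V s * t)

/-- The Clifford action `(X+ξ)·φ = i_X φ + ξ ∧ φ` of `V ⊕ V*` on `∧•V*`. -/
noncomputable def cliffAct {V : Type*} [AddCommGroup V] [Module ℝ V]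
    (v : V × Module.Dual ℝ V) :
    ExteriorAlgebra ℝ (Module.Dual ℝ V) →ₗ[ℝ] ExteriorAlgebra ℝ (Module.Dual ℝ V) :=
  CliffordAlgebra.contractLeft (Q := (0 : QuadraticForm ℝ (Module.Dual ℝ V)))
      (Module.Dual.eval ℝ V v.1) +
    LinearMap.mulLeft ℝ (ExteriorAlgebra.ι ℝ v.2)

section MukaiAux2

variable {V : Type*} [AddCommGroup V] [Module ℝ V]

lemma mukaiAux_extProj_apply (j : ℕ) (x : ExteriorAlgebra ℝ (Module.Dual ℝ V)) :
    extProj V j x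
      = (DirectSum.decompose (fun i : ℕ => ⋀[ℝ]^i (Module.Dual ℝ V)) x j
          : ExteriorAlgebra ℝ (Module.Dual ℝ V)) := rfl

lemma mukaiAux_extProj_of_mem {k j : ℕ} {x : ExteriorAlgebra ℝ (Module.Dual ℝ V)}
    (hx : x ∈ ⋀[ℝ]^k (Module.Dual ℝ V)) :
    extProj V j x = if k = j then x else 0 := by
  rw [mukaiAux_extProj_apply]
  split_ifs with h
  · subst h
    rw [DirectSum.decompose_of_mem_same (fun i : ℕ => ⋀[ℝ]^i (Module.Dual ℝ V)) hx]
  · rw [DirectSum.decompose_of_mem_ne (fun i : ℕ => ⋀[ℝ]^i (Module.Dual ℝ V)) hx h]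

lemma mukaiAux_alphaMap_of_mem {k : ℕ} {x : ExteriorAlgebra ℝ (Module.Dual ℝ V)}
    (hx : x ∈ ⋀[ℝ]^k (Module.Dual ℝ V)) :
    alphaMap V x = ((-1 : ℝ) ^ (k * (k - 1) / 2)) • x := by
  unfold alphaMap
  rw [LinearMap.comp_apply, LinearEquiv.coe_toLinearMap, DirectSum.decomposeLinearEquiv_apply,
    DirectSum.decompose_of_mem (fun i : ℕ => ⋀[ℝ]^i (Module.Dual ℝ V)) hx,
    ← DirectSum.lof_eq_of ℝ, DirectSum.toModule_lof]
  rfl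

lemma mukaiAux_top_eq_zero [FiniteDimensional ℝ V] {x : ExteriorAlgebra ℝ (Module.Dual ℝ V)}
    (hx : x ∈ ⋀[ℝ]^(Module.finrank ℝ V + 1) (Module.Dual ℝ V)) : x = 0 := by
  rw [← ExteriorAlgebra.ιMulti_span_fixedDegree] at hx
  induction hx using Submodule.span_induction with
  | mem y h =>
      obtain ⟨v, rfl⟩ := h
      refine AlternatingMap.map_linearDependent _ v ?_
      intro hli
      have hc := hli.fintype_card_le_finrank
      rw [Subspace.dual_finrank_eq, Fintype.card_fin] at hc
      omega
  | zero => rfl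
  | add x y _ _ hx hy => rw [hx, hy, add_zero]
  | smul a x _ hx => rw [hx, smul_zero]

lemma mukaiAux_extProj_contract [FiniteDimensional ℝ V]
    (f : Module.Dual ℝ (Module.Dual ℝ V)) (u : ExteriorAlgebra ℝ (Module.Dual ℝ V)) :
    extProj V (Module.finrank ℝ V)
      (CliffordAlgebra.contractLeft (Q := (0 : QuadraticForm ℝ (Module.Dual ℝ V))) f u) = 0 := by
  induction u using DirectSum.Decomposition.inductionOn
      (ℳ := fun i : ℕ => ⋀[ℝ]^i (Module.Dual ℝ V)) with
  | zero => rw [map_zero, map_zero]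
  | homogeneous x =>
      rename_i i
      obtain ⟨x, hx⟩ := x
      show extProj V (Module.finrank ℝ V) (CliffordAlgebra.contractLeft (Q := 0) f x) = 0
      by_cases h0 : i = 0
      · subst h0
        rw [mukaiAux_contract_zero f hx, map_zero]
      · by_cases htop : i = Module.finrank ℝ V + 1
        · subst htop
          rw [mukaiAux_top_eq_zero hx, map_zero, map_zero]
        · rw [mukaiAux_extProj_of_mem (mukaiAux_contract_mem f hx), if_neg (by omega)]
  | add m m' hm hm' => rw [map_add, map_add, hm, hm', add_zero]

lemma mukaiAux_cliffAct_apply (v : V × Module.Dual ℝ V)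
    (u : ExteriorAlgebra ℝ (Module.Dual ℝ V)) :
    cliffAct v u
      = CliffordAlgebra.contractLeft (Q := (0 : QuadraticForm ℝ (Module.Dual ℝ V)))
          (Module.Dual.eval ℝ V v.1) u + ExteriorAlgebra.ι ℝ v.2 * u := rfl

lemma mukaiAux_cliff_sq (v : V × Module.Dual ℝ V)
    (t : ExteriorAlgebra ℝ (Module.Dual ℝ V)) :
    cliffAct v (cliffAct v t) = (v.2 v.1) • t := by
  rw [mukaiAux_cliffAct_apply, mukaiAux_cliffAct_apply, map_add,
    CliffordAlgebra.contractLeft_contractLeft, CliffordAlgebra.contractLeft_ι_mul,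
    mul_add, ← mul_assoc, ExteriorAlgebra.ι_sq_zero, zero_mul]
  simp [Module.Dual.eval_apply]

lemma mukaiAux_adj [FiniteDimensional ℝ V] (v : V × Module.Dual ℝ V) {p : ℕ}
    {s : ExteriorAlgebra ℝ (Module.Dual ℝ V)} (hs : s ∈ ⋀[ℝ]^p (Module.Dual ℝ V))
    (t : ExteriorAlgebra ℝ (Module.Dual ℝ V)) :
    mukai V (cliffAct v s) t = mukai V s (cliffAct v t) := by
  set f := Module.Dual.eval ℝ V v.1 with hf
  set ξ := v.2 with hξ
  set m := Module.finrank ℝ V with hm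
  set ds := CliffordAlgebra.contractLeft (Q := (0 : QuadraticForm ℝ (Module.Dual ℝ V))) f s
    with hds_def
  set dt := CliffordAlgebra.contractLeft (Q := (0 : QuadraticForm ℝ (Module.Dual ℝ V))) f t
    with hdt_def
  have hds : ds ∈ ⋀[ℝ]^(p-1) (Module.Dual ℝ V) := mukaiAux_contract_mem f hs
  have hξs : ExteriorAlgebra.ι ℝ ξ * s ∈ ⋀[ℝ]^(p+1) (Module.Dual ℝ V) := by
    simpa [show 1 + p = p + 1 from Nat.add_comm 1 p]
      using SetLike.mul_mem_graded (mukaiAux_ι_mem ξ) hs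
  show extProj V m (alphaMap V (cliffAct v s) * t)
      = extProj V m (alphaMap V s * (cliffAct v t))
  rw [mukaiAux_cliffAct_apply, mukaiAux_cliffAct_apply, map_add (alphaMap V),
    mukaiAux_alphaMap_of_mem hds, mukaiAux_alphaMap_of_mem hξs, mukaiAux_alphaMap_of_mem hs,
    add_mul, smul_mul_assoc, smul_mul_assoc, map_add, map_smul, map_smul,
    smul_mul_assoc, map_smul, mul_add, map_add, smul_add]
  -- key1 : the wedge terms
  have hcomm : ExteriorAlgebra.ι ℝ ξ * s = ((-1 : ℝ))^p • (s * ExteriorAlgebra.ι ℝ ξ) :=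
    mukaiAux_ι_comm ξ hs
  have key1 : ((-1 : ℝ) ^ ((p+1) * ((p+1) - 1) / 2)) • extProj V m (ExteriorAlgebra.ι ℝ ξ * s * t)
      = ((-1 : ℝ) ^ (p * (p - 1) / 2)) • extProj V m (s * (ExteriorAlgebra.ι ℝ ξ * t)) := by
    rw [hcomm, smul_mul_assoc, map_smul, smul_smul, mukaiAux_sign_succ,
      mul_comm (((-1 : ℝ))^p) (((-1 : ℝ))^(p * (p-1)/2)), mul_assoc,
      mukaiAux_neg_one_sq, mul_one, mul_assoc]
  -- key2 : the contraction terms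
  have hd0 : extProj V m (ds * t) + ((-1 : ℝ))^p • extProj V m (s * dt) = 0 := by
    rw [← map_smul, ← map_add, ← mukaiAux_contract_mul f hs t, hm]
    exact mukaiAux_extProj_contract f _
  have key2 : ((-1 : ℝ) ^ ((p-1) * ((p-1) - 1) / 2)) • extProj V m (ds * t)
      = ((-1 : ℝ) ^ (p * (p - 1) / 2)) • extProj V m (s * dt) := by
    cases p with
    | zero =>
        have hz : ds = 0 := mukaiAux_contract_zero f hs
        have h0 : extProj V m (s * dt) = 0 := by
          rw [hz, zero_mul, map_zero, zero_add, pow_zero, one_smul] at hd0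
          exact hd0
        rw [hz, zero_mul, map_zero, smul_zero, h0, smul_zero]
    | succ n =>
        have hP : extProj V m (ds * t) = ((-1 : ℝ))^n • extProj V m (s * dt) := by
          have := eq_neg_of_add_eq_zero_left hd0
          rw [this, ← neg_smul, pow_succ, mul_neg_one, neg_neg]
        rw [hP, Nat.succ_sub_one, smul_smul, ← mul_comm (((-1 : ℝ))^n), ← mukaiAux_sign_succ,
          Nat.succ_sub_one]
  rw [key1, key2]

end MukaiAux2

/-- Clifford multiplication by `v = X + ξ` rescales the Mukai pairing by the
value `Q(v) = ξ(X)` of the quadratic form. -/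
theorem mukai_cliffAct
    (V : Type*) [AddCommGroup V] [Module ℝ V] [FiniteDimensional ℝ V]
    (v : V × Module.Dual ℝ V) (s t : ExteriorAlgebra ℝ (Module.Dual ℝ V)) :
    mukai V (cliffAct v s) (cliffAct v t) = (v.2 v.1) • mukai V s t := by
  have hadj : ∀ (s' t' : ExteriorAlgebra ℝ (Module.Dual ℝ V)),
      mukai V (cliffAct v s') t' = mukai V s' (cliffAct v t') := by
    intro s' t'
    induction s' using DirectSum.Decomposition.inductionOn
        (ℳ := fun i : ℕ => ⋀[ℝ]^i (Module.Dual ℝ V)) with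
    | zero => simp only [mukai, map_zero, zero_mul, map_zero]
    | homogeneous x =>
        obtain ⟨x, hx⟩ := x
        exact mukaiAux_adj v hx t'
    | add m m' hm hm' =>
        simp only [mukai, map_add, add_mul] at hm hm' ⊢
        rw [hm, hm']
  rw [hadj s (cliffAct v t), mukaiAux_cliff_sq]
  simp only [mukai, mul_smul_comm, map_smul]
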